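/- arXiv:2506.15926 — 3 statements merged into one kernel-verified Lean document; each statement's English description precedes it below -/
import Mathlib

section
/- For any partial rank (P_u, P_a) over N users and K arms, the set of super-stable matchings equals the intersection, over all full ranks (F_u, F_a) compatible with (P_u, P_a), of the sets of stable matchings: SuperStable(P_u, P_a) = ⋂_{(F_u,F_a) ∈ FullRank(P_u,P_a)} Stable(F_u, F_a). -/
/-!
Two-sided matching markets: partial ranks, full ranks, stable and super-stable
matchings, following Irving (1994) and Spieker (1995).

Statement 0: For any partial rank `(P_u, P_a)` over `N` users and `K` arms, the
set of super-stable matchings equals the intersection, over all full ranks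
compatible with `(P_u, P_a)`, of the sets of stable matchings.
-/

/-- A partial rank: a strict partial order for each user over the arms
(`u i j j'` means user `i` strictly prefers arm `j` to arm `j'`) and a strict
partial order for each arm over the users. -/
structure PartialRank (N K : ℕ) where
  u : Fin N → Fin K → Fin K → Prop
  a : Fin K → Fin N → Fin N → Prop
  u_irrefl : ∀ i j, ¬ u i j j
  u_trans : ∀ i j₁ j₂ j₃, u i j₁ j₂ → u i j₂ j₃ → u i j₁ j₃
  a_irrefl : ∀ j i, ¬ a j i i
  a_trans : ∀ j i₁ i₂ i₃, a j i₁ i₂ → a j i₂ i₃ → a j i₁ i₃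

/-- A full rank is a partial rank in which each of the orders is total. -/
def PartialRank.IsFull {N K : ℕ} (P : PartialRank N K) : Prop :=
  (∀ i j j', j ≠ j' → P.u i j j' ∨ P.u i j' j) ∧
  (∀ j i i', i ≠ i' → P.a j i i' ∨ P.a j i' i)

/-- A matching: an injective assignment of users to arms (with `N ≤ K` every
user can be matched). -/
def Matching (N K : ℕ) := {f : Fin N → Fin K // Function.Injective f}

/-- `(i, j)` is a blocking pair for `M` under the (full) rank `F`: user `i` and
arm `j` are not matched to each other, user `i` strictly prefers `j` to her
match, and arm `j` strictly prefers `i` to its match (an unmatched arm prefers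
any user). -/
def Blocks {N K : ℕ} (F : PartialRank N K) (M : Matching N K)
    (i : Fin N) (j : Fin K) : Prop :=
  M.1 i ≠ j ∧ F.u i j (M.1 i) ∧ ∀ i', M.1 i' = j → F.a j i i'

/-- A matching is stable under `F` if it admits no blocking pair. -/
def IsStable {N K : ℕ} (F : PartialRank N K) (M : Matching N K) : Prop :=
  ∀ i j, ¬ Blocks F M i j

/-- The set of stable matchings of a (full) rank. -/
def stableSet {N K : ℕ} (F : PartialRank N K) : Set (Matching N K) :=
  {M | IsStable F M}

/-- `(i, j)` super-blocks `M` under the partial rank `P`: user `i` and arm `j`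
are not matched to each other, user `i` prefers or is indifferent to `j`
compared to her match (i.e. does not strictly disprefer `j`), and arm `j`
prefers or is indifferent to `i` compared to its match. -/
def SuperBlocks {N K : ℕ} (P : PartialRank N K) (M : Matching N K)
    (i : Fin N) (j : Fin K) : Prop :=
  M.1 i ≠ j ∧ ¬ P.u i (M.1 i) j ∧ ∀ i', M.1 i' = j → ¬ P.a j i' i

/-- A matching is super-stable under `P` if it admits no super-blocking pair. -/
def IsSuperStable {N K : ℕ} (P : PartialRank N K) (M : Matching N K) : Prop :=
  ∀ i j, ¬ SuperBlocks P M i j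

/-- The set of super-stable matchings of a partial rank. -/
def superStableSet {N K : ℕ} (P : PartialRank N K) : Set (Matching N K) :=
  {M | IsSuperStable P M}

/-- `P'` is compatible with `P` if no strict comparison of `P'` is reversed
in `P`. -/
def Compatible {N K : ℕ} (P' P : PartialRank N K) : Prop :=
  (∀ i j j', P'.u i j j' → ¬ P.u i j' j) ∧
  (∀ j i i', P'.a j i i' → ¬ P.a j i' i)

/-- The set of full ranks compatible with a given partial rank. -/
def fullRankSet {N K : ℕ} (P : PartialRank N K) : Set (PartialRank N K) :=
  {F | F.IsFull ∧ Compatible F P}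

/-- Any strict partial order extends to a strict linear order. -/
lemma linearExtStrict {α : Type*} (r : α → α → Prop)
    (hirr : ∀ x, ¬ r x x) (htr : ∀ x y z, r x y → r y z → r x z) :
    ∃ s : α → α → Prop, (∀ x, ¬ s x x) ∧ (∀ x y z, s x y → s y z → s x z) ∧
      (∀ x y, x ≠ y → s x y ∨ s y x) ∧ (∀ x y, r x y → s x y) := by
  haveI : IsPartialOrder α (fun x y => r x y ∨ x = y) :=
    { refl := fun x => Or.inr rfl
      trans := by
        rintro a b c (h | rfl) hbc
        · rcases hbc with h' | rfl
          · exact Or.inl (htr _ _ _ h h')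
          · exact Or.inl h
        · exact hbc
      antisymm := by
        rintro a b (h | rfl) hba
        · rcases hba with h' | rfl
          · exact absurd (htr _ _ _ h h') (hirr a)
          · rfl
        · rfl }
  obtain ⟨s', hs', hext⟩ := extend_partialOrder (fun x y => r x y ∨ x = y)
  refine ⟨fun x y => s' x y ∧ x ≠ y, fun x h => h.2 rfl, ?_, ?_, ?_⟩
  · rintro x y z ⟨h1, h2⟩ ⟨h3, h4⟩
    refine ⟨hs'.1.1.2.trans _ _ _ h1 h3, ?_⟩
    rintro rfl
    exact h2 (hs'.1.2.antisymm _ _ h1 h3)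
  · intro x y hxy
    rcases hs'.2.total x y with h | h
    · exact Or.inl ⟨h, hxy⟩
    · exact Or.inr ⟨h, hxy.symm⟩
  · intro x y hr
    refine ⟨hext _ _ (Or.inl hr), ?_⟩
    rintro rfl
    exact hirr x hr

/-- A strict partial order with an added consistent pair extends to a strict
linear order containing that pair. -/
lemma linearExtStrictPair {α : Type*} (r : α → α → Prop)
    (hirr : ∀ x, ¬ r x x) (htr : ∀ x y z, r x y → r y z → r x z)
    (a b : α) (hab : a ≠ b) (hba : ¬ r b a) :
    ∃ s : α → α → Prop, (∀ x, ¬ s x x) ∧ (∀ x y z, s x y → s y z → s x z) ∧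
      (∀ x y, x ≠ y → s x y ∨ s y x) ∧ (∀ x y, r x y → s x y) ∧ s a b := by
  set r' : α → α → Prop :=
    fun x y => r x y ∨ ((r x a ∨ x = a) ∧ (r b y ∨ y = b)) with hr'
  have hnoc : ∀ x : α, (r x a ∨ x = a) → (r b x ∨ x = b) → False := by
    rintro x (h1 | rfl) (h2 | rfl)
    · exact hba (htr _ _ _ h2 h1)
    · exact hba h1
    · exact hba h2
    · exact hab rfl
  have hirr' : ∀ x, ¬ r' x x := by
    rintro x (h | ⟨h1, h2⟩)
    · exact hirr x h
    · exact hnoc x h1 h2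
  have htr' : ∀ x y z, r' x y → r' y z → r' x z := by
    rintro x y z (h | ⟨h1, h2⟩) (h' | ⟨h1', h2'⟩)
    · exact Or.inl (htr _ _ _ h h')
    · refine Or.inr ⟨?_, h2'⟩
      rcases h1' with h1' | rfl
      · exact Or.inl (htr _ _ _ h h1')
      · exact Or.inl h
    · refine Or.inr ⟨h1, ?_⟩
      rcases h2 with h2 | rfl
      · exact Or.inl (htr _ _ _ h2 h')
      · exact Or.inl h'
    · exact (hnoc _ h1' h2).elim
  obtain ⟨s, hs1, hs2, hs3, hs4⟩ :=
    linearExtStrict r' hirr' htr'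
  exact ⟨s, hs1, hs2, hs3, fun x y h => hs4 _ _ (Or.inl h),
    hs4 _ _ (Or.inr ⟨Or.inr rfl, Or.inr rfl⟩)⟩

/-- Spieker 1995: for any partial rank `P`, the set of
super-stable matchings of `P` equals the intersection over all full ranks `F`
compatible with `P` of the sets of stable matchings of `F`. -/
theorem superStableSet_eq_iInter_stableSet {N K : ℕ} (hNK : N ≤ K)
    (P : PartialRank N K) :
    superStableSet P = ⋂ F ∈ fullRankSet P, stableSet F := by
  ext M
  simp only [Set.mem_iInter]
  constructor
  · -- super-stable ⇒ stable under every compatible full rank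
    intro hM F hF i j hB
    obtain ⟨hne, hu, ha⟩ := hB
    exact hM i j ⟨hne, hF.2.1 i j (M.1 i) hu,
      fun i' hi' => hF.2.2 j i i' (ha i' hi')⟩
  · -- stable under every compatible full rank ⇒ super-stable
    intro hM i₀ j₀ hB
    obtain ⟨hne, hu, ha⟩ := hB
    -- build the user orders
    have hU : ∀ i : Fin N, ∃ s : Fin K → Fin K → Prop, (∀ x, ¬ s x x) ∧
        (∀ x y z, s x y → s y z → s x z) ∧ (∀ x y, x ≠ y → s x y ∨ s y x) ∧
        (∀ x y, P.u i x y → s x y) ∧ (i = i₀ → s j₀ (M.1 i₀)) := by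
      intro i
      by_cases h : i = i₀
      · subst h
        obtain ⟨s, h1, h2, h3, h4, h5⟩ := linearExtStrictPair (P.u i)
          (P.u_irrefl i) (P.u_trans i) j₀ (M.1 i) (Ne.symm hne) hu
        exact ⟨s, h1, h2, h3, h4, fun _ => h5⟩
      · obtain ⟨s, h1, h2, h3, h4⟩ := linearExtStrict (P.u i)
          (P.u_irrefl i) (P.u_trans i)
        exact ⟨s, h1, h2, h3, h4, fun h' => absurd h' h⟩
    -- build the arm orders
    have hA : ∀ j : Fin K, ∃ s : Fin N → Fin N → Prop, (∀ x, ¬ s x x) ∧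
        (∀ x y z, s x y → s y z → s x z) ∧ (∀ x y, x ≠ y → s x y ∨ s y x) ∧
        (∀ x y, P.a j x y → s x y) ∧
        (j = j₀ → ∀ i', M.1 i' = j₀ → s i₀ i') := by
      intro j
      by_cases h : j = j₀
      · subst h
        by_cases hm : ∃ i', M.1 i' = j
        · obtain ⟨i₁, hi₁⟩ := hm
          have hne₁ : i₀ ≠ i₁ := by
            rintro rfl; exact hne hi₁
          obtain ⟨s, h1, h2, h3, h4, h5⟩ := linearExtStrictPair (P.a j)
            (P.a_irrefl j) (P.a_trans j) i₀ i₁ hne₁ (ha i₁ hi₁)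
          refine ⟨s, h1, h2, h3, h4, fun _ i' hi' => ?_⟩
          have : i' = i₁ := M.2 (hi'.trans hi₁.symm)
          exact this ▸ h5
        · obtain ⟨s, h1, h2, h3, h4⟩ := linearExtStrict (P.a j)
            (P.a_irrefl j) (P.a_trans j)
          exact ⟨s, h1, h2, h3, h4, fun _ i' hi' => absurd ⟨i', hi'⟩ hm⟩
      · obtain ⟨s, h1, h2, h3, h4⟩ := linearExtStrict (P.a j)
          (P.a_irrefl j) (P.a_trans j)
        exact ⟨s, h1, h2, h3, h4, fun h' => absurd h' h⟩
    choose su su1 su2 su3 su4 su5 using hU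
    choose sa sa1 sa2 sa3 sa4 sa5 using hA
    set F : PartialRank N K :=
      ⟨su, sa, su1, fun i j₁ j₂ j₃ => su2 i j₁ j₂ j₃, sa1,
        fun j i₁ i₂ i₃ => sa2 j i₁ i₂ i₃⟩ with hF
    have hFull : F.IsFull := ⟨fun i j j' => su3 i j j', fun j i i' => sa3 j i i'⟩
    have hCompat : Compatible F P := by
      constructor
      · intro i j j' hs hp
        exact su1 i j (su2 i j j' j hs (su4 i j' j hp))
      · intro j i i' hs hp
        exact sa1 j i (sa2 j i i' i hs (sa4 j i' i hp))
    exact hM F ⟨hFull, hCompat⟩ i₀ j₀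
      ⟨hne, su5 i₀ rfl, fun i' hi' => sa5 j₀ rfl i' hi'⟩
end

section
/- Consider rewards (μ, γ) with no ties within any row and let (F_u, F_a) be the induced full rank. For any partial rank (P_u, P_a), if (F_u, F_a) ∈ FullRank(P_u, P_a) and the overlap width satisfies W_ov(P_u, P_a; μ, γ) < Δ_A(μ, γ), then (P_u, P_a) ∈ A(F_u, F_a), i.e., (P_u, P_a) is admissible. -/
/-- A partial rank `P` is admissible for a full rank `F` if `F` is compatible
with `P` and `P` has at least one super-stable matching. -/
def Admissible {N K : ℕ} (F P : PartialRank N K) : Prop :=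
  F ∈ fullRankSet P ∧ (superStableSet P).Nonempty

/-- The rank induced by rewards: a user strictly prefers the arm with higher
reward, and an arm strictly prefers the user with higher reward.  When there
are no ties within rows this is a full rank. -/
def inducedRank {N K : ℕ} (μ : Fin N → Fin K → ℝ) (γ : Fin K → Fin N → ℝ) :
    PartialRank N K where
  u := fun i j j' => μ i j' < μ i j
  a := fun j i i' => γ j i' < γ j i
  u_irrefl := fun _ _ => lt_irrefl _
  u_trans := fun _ _ _ _ h h' => lt_trans h' h
  a_irrefl := fun _ _ => lt_irrefl _
  a_trans := fun _ _ _ _ h h' => lt_trans h' h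

/-- The minimum gap of a partial rank with respect to rewards: the smallest
absolute reward difference over strictly comparable pairs of arms (for some
user) or strictly comparable pairs of users (for some arm). -/
noncomputable def minGap {N K : ℕ} (P : PartialRank N K)
    (μ : Fin N → Fin K → ℝ) (γ : Fin K → Fin N → ℝ) : ℝ :=
  sInf ({d | ∃ i j j', (P.u i j j' ∨ P.u i j' j) ∧ d = |μ i j - μ i j'|} ∪
        {d | ∃ j i i', (P.a j i i' ∨ P.a j i' i) ∧ d = |γ j i - γ j i'|})

/-- The overlap width of a partial rank with respect to rewards: the largest
absolute reward difference over distinct incomparable (tied) pairs. -/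
noncomputable def overlapWidth {N K : ℕ} (P : PartialRank N K)
    (μ : Fin N → Fin K → ℝ) (γ : Fin K → Fin N → ℝ) : ℝ :=
  sSup ({d | ∃ i j j', j ≠ j' ∧ ¬ P.u i j j' ∧ ¬ P.u i j' j ∧ d = |μ i j - μ i j'|} ∪
        {d | ∃ j i i', i ≠ i' ∧ ¬ P.a j i i' ∧ ¬ P.a j i' i ∧ d = |γ j i - γ j i'|})

/-- The admissible gap: the largest minimum gap over all partial ranks
admissible for the full rank induced by the rewards. -/
noncomputable def admissibleGap {N K : ℕ}
    (μ : Fin N → Fin K → ℝ) (γ : Fin K → Fin N → ℝ) : ℝ :=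
  sSup {d | ∃ P : PartialRank N K,
    Admissible (inducedRank μ γ) P ∧ d = minGap P μ γ}

/-- Lemma 1: if the full rank induced by tie-free rewards is
compatible with a partial rank `P` and the overlap width of `P` is smaller than
the admissible gap, then `P` is admissible. -/
theorem admissible_of_overlapWidth_lt_admissibleGap
    {N K : ℕ} (hNK : N ≤ K)
    (μ : Fin N → Fin K → ℝ) (γ : Fin K → Fin N → ℝ)
    (hμ : ∀ i j j', j ≠ j' → μ i j ≠ μ i j')
    (hγ : ∀ j i i', i ≠ i' → γ j i ≠ γ j i')
    (P : PartialRank N K)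
    (hcompat : inducedRank μ γ ∈ fullRankSet P)
    (hov : overlapWidth P μ γ < admissibleGap μ γ) :
    Admissible (inducedRank μ γ) P := by
  obtain ⟨hfull, hcP⟩ := hcompat
  have hov0 : 0 ≤ overlapWidth P μ γ := by
    apply Real.sSup_nonneg
    rintro x (⟨i, j, j', _, _, _, rfl⟩ | ⟨j, i, i', _, _, _, rfl⟩) <;> exact abs_nonneg _
  have hex : ∃ d ∈ {d | ∃ P' : PartialRank N K,
      Admissible (inducedRank μ γ) P' ∧ d = minGap P' μ γ}, overlapWidth P μ γ < d := by
    by_contra hc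
    push_neg at hc
    have : admissibleGap μ γ ≤ overlapWidth P μ γ :=
      Real.sSup_le (fun x hx => hc x hx) hov0
    exact absurd hov (not_lt.mpr this)
  obtain ⟨d, ⟨P', hadm, rfl⟩, hd⟩ := hex
  obtain ⟨⟨hfull', hcP'⟩, M, hM⟩ := hadm
  refine ⟨⟨hfull, hcP⟩, M, ?_⟩
  have hbdd : BddAbove
      ({d | ∃ i j j', j ≠ j' ∧ ¬ P.u i j j' ∧ ¬ P.u i j' j ∧ d = |μ i j - μ i j'|} ∪
       {d | ∃ j i i', i ≠ i' ∧ ¬ P.a j i i' ∧ ¬ P.a j i' i ∧ d = |γ j i - γ j i'|}) := by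
    have hfin : (Set.range (fun t : Fin N × Fin K × Fin K => |μ t.1 t.2.1 - μ t.1 t.2.2|) ∪
        Set.range (fun t : Fin K × Fin N × Fin N => |γ t.1 t.2.1 - γ t.1 t.2.2|)).Finite :=
      (Set.finite_range _).union (Set.finite_range _)
    refine BddAbove.mono ?_ hfin.bddAbove
    rintro x (⟨i, j, j', _, _, _, rfl⟩ | ⟨j, i, i', _, _, _, rfl⟩)
    · exact Or.inl ⟨(i, j, j'), rfl⟩
    · exact Or.inr ⟨(j, i, i'), rfl⟩
  have hbb : BddBelow
      ({d | ∃ i j j', (P'.u i j j' ∨ P'.u i j' j) ∧ d = |μ i j - μ i j'|} ∪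
       {d | ∃ j i i', (P'.a j i i' ∨ P'.a j i' i) ∧ d = |γ j i - γ j i'|}) := by
    refine ⟨0, ?_⟩
    rintro x (⟨i, j, j', _, rfl⟩ | ⟨j, i, i', _, rfl⟩) <;> exact abs_nonneg _
  intro i j hblk
  obtain ⟨hne, hPu, hPa⟩ := hblk
  apply hM i j
  refine ⟨hne, ?_, ?_⟩
  · intro h'
    have hF : ¬ (μ i (M.1 i) < μ i j) := fun hF => hcP'.1 i j (M.1 i) hF h'
    have hlt : μ i j < μ i (M.1 i) :=
      lt_of_le_of_ne (not_lt.mp hF) (hμ i j (M.1 i) (Ne.symm hne))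
    have hnPjMi : ¬ P.u i j (M.1 i) := hcP.1 i (M.1 i) j hlt
    have h1 : minGap P' μ γ ≤ |μ i (M.1 i) - μ i j| :=
      csInf_le hbb (Or.inl ⟨i, M.1 i, j, Or.inl h', rfl⟩)
    have h2 : |μ i (M.1 i) - μ i j| ≤ overlapWidth P μ γ :=
      le_csSup hbdd (Or.inl ⟨i, M.1 i, j, hne, hPu, hnPjMi, rfl⟩)
    exact absurd (h1.trans h2) (not_le.mpr hd)
  · intro i' hi' h'
    have hii' : i ≠ i' := fun h => hne (h ▸ hi')
    have hF : ¬ (γ j i' < γ j i) := fun hF => hcP'.2 j i i' hF h'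
    have hlt : γ j i < γ j i' := lt_of_le_of_ne (not_lt.mp hF) (hγ j i i' hii')
    have hnP : ¬ P.a j i i' := hcP.2 j i' i hlt
    have h1 : minGap P' μ γ ≤ |γ j i' - γ j i| :=
      csInf_le hbb (Or.inr ⟨j, i', i, Or.inl h', rfl⟩)
    have h2 : |γ j i' - γ j i| ≤ overlapWidth P μ γ :=
      le_csSup hbdd (Or.inr ⟨j, i', i, Ne.symm hii', hPa i' hi', hnP, rfl⟩)
    exact absurd (h1.trans h2) (not_le.mpr hd)
end

section
/- Conditioned on the good event ⋂_{t≥1} G_t, for any time t ≥ 1, if the number of round-robin exploration rounds executed by Algorithm 1 up to time t satisfies N_explore(t) > K + 96 K log(T) / Δ_A(μ, γ)², then the UCB-LCB partial rank at time t lies in the admissible set: (P_u(t), P_a(t)) ∈ A(F*_u, F*_a). -/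
/-- The UCB-LCB partial rank built from empirical means `hatμ, hatγ` and sample
counts `n` at time `t`: an item is placed strictly above another iff (both have
been sampled and) the former's LCB exceeds the latter's UCB, with bonus
`√(6 log t / n)`. -/
noncomputable def ucbLcbRank {N K : ℕ} (hatμ : Fin N → Fin K → ℝ)
    (hatγ : Fin K → Fin N → ℝ) (n : Fin N → Fin K → ℕ) (t : ℕ) :
    PartialRank N K where
  u := fun i j j' =>
    0 < n i j ∧ 0 < n i j' ∧
    hatμ i j' + Real.sqrt (6 * Real.log t / (n i j' : ℝ)) <
      hatμ i j - Real.sqrt (6 * Real.log t / (n i j : ℝ))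
  a := fun j i i' =>
    0 < n i j ∧ 0 < n i' j ∧
    hatγ j i' + Real.sqrt (6 * Real.log t / (n i' j : ℝ)) <
      hatγ j i - Real.sqrt (6 * Real.log t / (n i j : ℝ))
  u_irrefl := by
    intro i j h
    have h1 := Real.sqrt_nonneg (6 * Real.log t / (n i j : ℝ))
    linarith [h.2.2]
  u_trans := by
    intro i j₁ j₂ j₃ h h'
    refine ⟨h.1, h'.2.1, ?_⟩
    have h2 := Real.sqrt_nonneg (6 * Real.log t / (n i j₂ : ℝ))
    linarith [h.2.2, h'.2.2]
  a_irrefl := by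
    intro j i h
    have h1 := Real.sqrt_nonneg (6 * Real.log t / (n i j : ℝ))
    linarith [h.2.2]
  a_trans := by
    intro j i₁ i₂ i₃ h h'
    refine ⟨h.1, h'.2.1, ?_⟩
    have h2 := Real.sqrt_nonneg (6 * Real.log t / (n i₂ j : ℝ))
    linarith [h.2.2, h'.2.2]

open scoped Classical

/-- Number of times the pair `(i, j)` has been matched during rounds
`1, …, t-1` of the trajectory `matchAt`. -/
def cnt {N K : ℕ} (matchAt : ℕ → Matching N K) (i : Fin N) (j : Fin K)
    (t : ℕ) : ℕ :=
  ((Finset.Icc 1 (t - 1)).filter (fun s => (matchAt s).1 i = j)).card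

/-- The user-side empirical mean of pair `(i, j)` at time `t`: the true mean
plus the average of the observed noise samples (`η i j k` is the noise of the
`k`-th sample of the pair). -/
noncomputable def hatMu {N K : ℕ} (μ : Fin N → Fin K → ℝ)
    (η : Fin N → Fin K → ℕ → ℝ) (matchAt : ℕ → Matching N K)
    (i : Fin N) (j : Fin K) (t : ℕ) : ℝ :=
  μ i j + (∑ k ∈ Finset.range (cnt matchAt i j t), η i j k) /
    (cnt matchAt i j t : ℝ)

/-- The arm-side empirical mean of pair `(i, j)` at time `t`. -/
noncomputable def hatGa {N K : ℕ} (γ : Fin K → Fin N → ℝ)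
    (η' : Fin N → Fin K → ℕ → ℝ) (matchAt : ℕ → Matching N K)
    (i : Fin N) (j : Fin K) (t : ℕ) : ℝ :=
  γ j i + (∑ k ∈ Finset.range (cnt matchAt i j t), η' i j k) /
    (cnt matchAt i j t : ℝ)

/-- The UCB-LCB partial rank of the trajectory at time `t`. -/
noncomputable def trajRank {N K : ℕ} (μ : Fin N → Fin K → ℝ)
    (γ : Fin K → Fin N → ℝ) (η η' : Fin N → Fin K → ℕ → ℝ)
    (matchAt : ℕ → Matching N K) (t : ℕ) : PartialRank N K :=
  ucbLcbRank (fun i j => hatMu μ η matchAt i j t)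
    (fun j i => hatGa γ η' matchAt i j t)
    (fun i j => cnt matchAt i j t) t

/-- The number of exploration rounds (rounds whose UCB-LCB partial rank has no
super-stable matching, so that Extended Gale–Shapley returns `∅` and Algorithm 1
explores) among rounds `1, …, t-1`. -/
noncomputable def nExplore {N K : ℕ} (μ : Fin N → Fin K → ℝ)
    (γ : Fin K → Fin N → ℝ) (η η' : Fin N → Fin K → ℕ → ℝ)
    (matchAt : ℕ → Matching N K) (t : ℕ) : ℕ :=
  ((Finset.Icc 1 (t - 1)).filter
    (fun s => superStableSet (trajRank μ γ η η' matchAt s) = ∅)).card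

/-- The round-robin exploration matching with exploration index `τ`:
user `i` is matched to arm `(i + τ) mod K`. -/
def roundRobin {N K : ℕ} (hNK : N ≤ K) (hK : 0 < K) (τ : ℕ) : Matching N K :=
  ⟨fun i => ⟨((i : ℕ) + τ) % K, Nat.mod_lt _ hK⟩, by
    intro a b hab
    have h : ((a : ℕ) + τ) % K = ((b : ℕ) + τ) % K := congrArg Fin.val hab
    have ha : (a : ℕ) % K = (b : ℕ) % K := Nat.ModEq.add_right_cancel' τ h
    have : (a : ℕ) = (b : ℕ) := by
      rwa [Nat.mod_eq_of_lt (lt_of_lt_of_le a.2 hNK),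
        Nat.mod_eq_of_lt (lt_of_lt_of_le b.2 hNK)] at ha
    exact Fin.ext this⟩

/-- The good event along the trajectory: at every time and for every sampled
pair, the empirical means are within `√(6 log t / n_{i,j}(t))` of the truth. -/
def GoodTraj {N K : ℕ} (μ : Fin N → Fin K → ℝ) (γ : Fin K → Fin N → ℝ)
    (η η' : Fin N → Fin K → ℕ → ℝ) (matchAt : ℕ → Matching N K) : Prop :=
  ∀ t, 1 ≤ t → ∀ (i : Fin N) (j : Fin K), 0 < cnt matchAt i j t →
    |μ i j - hatMu μ η matchAt i j t| ≤
      Real.sqrt (6 * Real.log t / (cnt matchAt i j t : ℝ)) ∧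
    |γ j i - hatGa γ η' matchAt i j t| ≤
      Real.sqrt (6 * Real.log t / (cnt matchAt i j t : ℝ))


/-!
On the good event every strict comparison made by the UCB-LCB rank is a true one, so the true
full rank is compatible with it. Round-robin exploration matches each pair once in every `K`
consecutive exploration rounds, so after more than `K + 96 K log T / Δ²` of them every confidence
radius is below `Δ / 4`, where `Δ` is the admissible gap. An admissible partial rank whose minimum
gap exceeds four radii then has all of its strict comparisons resolved by the UCB-LCB rank, which
therefore inherits its super-stable matching. That `Δ > 0` comes from the Gale–Shapley theorem
for the true full rank.
-/

open Finset Real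

namespace PartialRank

variable {N K : ℕ}

instance : LE (PartialRank N K) :=
  ⟨fun P Q =>
    (∀ i j j', P.u i j j' → Q.u i j j') ∧ (∀ j i i', P.a j i i' → Q.a j i i')⟩

instance : Finite (PartialRank N K) :=
  Finite.of_injective (fun P : PartialRank N K => (P.u, P.a)) <| by
    rintro ⟨⟩ ⟨⟩ h
    simp_all

theorem u_asymm (P : PartialRank N K) {i j j'} (h : P.u i j j') : ¬ P.u i j' j :=
  fun h' => P.u_irrefl i j (P.u_trans i j j' j h h')

theorem a_asymm (P : PartialRank N K) {j i i'} (h : P.a j i i') : ¬ P.a j i' i :=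
  fun h' => P.a_irrefl j i (P.a_trans j i i' i h h')

end PartialRank

section Refinement

variable {N K : ℕ} {P Q F : PartialRank N K}

theorem compatible_of_le (h : P ≤ F) : Compatible F P :=
  ⟨fun _ _ _ hF hP => F.u_asymm hF (h.1 _ _ _ hP),
    fun _ _ _ hF hP => F.a_asymm hF (h.2 _ _ _ hP)⟩

theorem le_of_compatible (hF : F.IsFull) (h : Compatible F P) : P ≤ F := by
  constructor
  · intro i j j' hP
    have hne : j ≠ j' := by rintro rfl; exact P.u_irrefl i j hP
    exact (hF.1 i j j' hne).resolve_right fun hF' => h.1 i j' j hF' hP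
  · intro j i i' hP
    have hne : i ≠ i' := by rintro rfl; exact P.a_irrefl j i hP
    exact (hF.2 j i i' hne).resolve_right fun hF' => h.2 j i' i hF' hP

theorem IsSuperStable.mono {M : Matching N K} (hPQ : P ≤ Q) (h : IsSuperStable P M) :
    IsSuperStable Q M := by
  rintro i j ⟨hne, hu, ha⟩
  exact h i j ⟨hne, fun hP => hu (hPQ.1 _ _ _ hP), fun i' hi' hP => ha i' hi' (hPQ.2 _ _ _ hP)⟩

theorem isSuperStable_of_le_one (hK : K ≤ 1) (P : PartialRank N K) (M : Matching N K) :
    IsSuperStable P M := by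
  rintro i j ⟨hne, -, -⟩
  have := Fin.subsingleton_iff_le_one.2 hK
  exact hne (Subsingleton.elim _ _)

end Refinement

section GaleShapley

variable {N K : ℕ} (μ : Fin N → Fin K → ℝ) (γ : Fin K → Fin N → ℝ)

def IsFavourite (s : Finset (Fin K)) (i : Fin N) (j : Fin K) : Prop :=
  j ∉ s ∧ ∀ j' ∉ s, μ i j' ≤ μ i j

/-- The Gale–Shapley invariant, `R i` being the set of arms that have rejected user `i`:
each of them is currently proposed to by a user it prefers to `i`. -/
def GSInvariant (R : Fin N → Finset (Fin K)) : Prop :=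
  ∀ i, ∀ j ∈ R i, ∃ i', γ j i < γ j i' ∧ IsFavourite μ (R i') i' j

variable {μ γ}

theorem exists_isFavourite {s : Finset (Fin K)} (hs : ∃ j, j ∉ s) (i : Fin N) :
    ∃ j, IsFavourite μ s i j := by
  obtain ⟨j₀, hj₀⟩ := hs
  obtain ⟨j, hj, hmax⟩ := (univ \ s).exists_max_image (μ i) ⟨j₀, by simpa using hj₀⟩
  exact ⟨j, by simpa using hj, fun j' hj' => hmax j' (by simpa using hj')⟩

theorem IsFavourite.unique (hμ : ∀ i j j', j ≠ j' → μ i j ≠ μ i j')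
    {s : Finset (Fin K)} {i : Fin N} {j j' : Fin K}
    (h : IsFavourite μ s i j) (h' : IsFavourite μ s i j') : j = j' := by
  by_contra hne
  exact hμ i j j' hne (le_antisymm (h'.2 j h.1) (h.2 j' h'.1))

theorem GSInvariant.exists_notMem (hμ : ∀ i j j', j ≠ j' → μ i j ≠ μ i j')
    (hNK : N ≤ K) {R : Fin N → Finset (Fin K)} (hR : GSInvariant μ γ R) (i : Fin N) :
    ∃ j, j ∉ R i := by
  by_contra! hall
  choose g hg using fun j => hR i j (hall j)
  -- the holders `g j` of the `K ≥ N` arms are distinct, so one of them is `i` itself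
  have hinj : Function.Injective g := fun j₁ j₂ h =>
    (hg j₁).2.unique hμ (h ▸ (hg j₂).2)
  have hKN : K = N := le_antisymm (by simpa using Fintype.card_le_of_injective g hinj) hNK
  have hbij := (Fintype.bijective_iff_injective_and_card g).2 ⟨hinj, by simp [hKN]⟩
  obtain ⟨j, rfl⟩ := hbij.2 i
  exact lt_irrefl _ (hg j).1

theorem GSInvariant.isSuperStable (hμ : ∀ i j j', j ≠ j' → μ i j ≠ μ i j')
    {R : Fin N → Finset (Fin K)} (hR : GSInvariant μ γ R) {p : Fin N → Fin K}
    (hp : ∀ i, IsFavourite μ (R i) i (p i)) (hinj : Function.Injective p) :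
    IsSuperStable (inducedRank μ γ) ⟨p, hinj⟩ := by
  rintro i j ⟨hne, hu, ha⟩
  by_cases hj : j ∈ R i
  · obtain ⟨i', hlt, hfav⟩ := hR i j hj
    exact ha i' ((hp i').unique hμ hfav) hlt
  · exact hμ i _ _ hne (le_antisymm ((hp i).2 j hj) (not_lt.1 hu)).symm

theorem GSInvariant.reject (hμ : ∀ i j j', j ≠ j' → μ i j ≠ μ i j')
    {R : Fin N → Finset (Fin K)} (hR : GSInvariant μ γ R)
    {ib iw : Fin N} {j : Fin K} (hb : IsFavourite μ (R ib) ib j)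
    (hw : IsFavourite μ (R iw) iw j) (hlt : γ j iw < γ j ib) :
    GSInvariant μ γ (Function.update R iw (insert j (R iw))) := by
  have hbw : ib ≠ iw := by rintro rfl; exact lt_irrefl _ hlt
  have hb' : IsFavourite μ (Function.update R iw (insert j (R iw)) ib) ib j := by
    rwa [Function.update_of_ne hbw]
  intro i j₀ hj₀
  by_cases hi : i = iw
  · subst hi
    rw [Function.update_self, mem_insert] at hj₀
    rcases hj₀ with rfl | hj₀
    · exact ⟨ib, hlt, hb'⟩
    · obtain ⟨i', hlt', hfav⟩ := hR i j₀ hj₀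
      have hi' : i' ≠ i := by rintro rfl; exact hw.1 (hfav.unique hμ hw ▸ hj₀)
      exact ⟨i', hlt', by rwa [Function.update_of_ne hi']⟩
  · rw [Function.update_of_ne hi] at hj₀
    obtain ⟨i', hlt', hfav⟩ := hR i j₀ hj₀
    by_cases hi' : i' = iw
    · subst hi'
      obtain rfl := hfav.unique hμ hw
      exact ⟨ib, hlt'.trans hlt, hb'⟩
    · exact ⟨i', hlt', by rwa [Function.update_of_ne hi']⟩

theorem exists_isSuperStable_inducedRank (hμ : ∀ i j j', j ≠ j' → μ i j ≠ μ i j')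
    (hγ : ∀ j i i', i ≠ i' → γ j i ≠ γ j i') (hNK : N ≤ K) :
    ∃ M, IsSuperStable (inducedRank μ γ) M := by
  -- An invariant state with the most rejections is a fixed point of Gale–Shapley:
  -- two users proposing to the same arm would allow one more rejection.
  obtain ⟨R, hRmem, hmax⟩ := (univ.filter (GSInvariant μ γ)).exists_max_image
    (fun R => ∑ i, (R i).card) ⟨fun _ => ∅, by simp [GSInvariant]⟩
  have hR := (mem_filter.1 hRmem).2
  choose p hp using fun i => exists_isFavourite (μ := μ) (hR.exists_notMem hμ hNK i) i
  by_cases hinj : Function.Injective p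
  · exact ⟨_, hR.isSuperStable hμ hp hinj⟩
  exfalso
  obtain ⟨i₁, i₂, hp₁₂, hne⟩ := Function.not_injective_iff.1 hinj
  suffices ∀ {ib iw}, p ib = p iw → γ (p iw) iw < γ (p iw) ib → False by
    rcases (hγ (p i₂) i₁ i₂ hne).lt_or_gt with h | h
    · exact this hp₁₂.symm (hp₁₂ ▸ h)
    · exact this hp₁₂ h
  intro ib iw hpbw hlt
  have hR' := hR.reject hμ (hpbw ▸ hp ib) (hp iw) hlt
  refine (hmax _ (mem_filter.2 ⟨mem_univ _, hR'⟩)).not_gt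
    (sum_lt_sum (fun i _ => ?_) ⟨iw, mem_univ _, ?_⟩)
  · apply card_le_card
    rcases eq_or_ne i iw with rfl | hi
    · simp [subset_insert]
    · simp [Function.update_of_ne hi]
  · simpa using card_lt_card (ssubset_insert (hp iw).1)

end GaleShapley

section Gaps

variable {N K : ℕ} (P : PartialRank N K) (μ : Fin N → Fin K → ℝ)
  (γ : Fin K → Fin N → ℝ)

def gapSet : Set ℝ :=
  {d | ∃ i j j', (P.u i j j' ∨ P.u i j' j) ∧ d = |μ i j - μ i j'|} ∪
    {d | ∃ j i i', (P.a j i i' ∨ P.a j i' i) ∧ d = |γ j i - γ j i'|}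

theorem gapSet_finite : (gapSet P μ γ).Finite := by
  refine (Set.finite_range fun x : (Fin N × Fin K × Fin K) ⊕ (Fin K × Fin N × Fin N) =>
    x.elim (fun y => |μ y.1 y.2.1 - μ y.1 y.2.2|)
      (fun y => |γ y.1 y.2.1 - γ y.1 y.2.2|)).subset ?_
  rintro d (⟨i, j, j', -, rfl⟩ | ⟨j, i, i', -, rfl⟩)
  · exact ⟨Sum.inl (i, j, j'), rfl⟩
  · exact ⟨Sum.inr (j, i, i'), rfl⟩

theorem bddBelow_gapSet : BddBelow (gapSet P μ γ) := by
  refine ⟨0, ?_⟩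
  rintro d (⟨i, j, j', -, rfl⟩ | ⟨j, i, i', -, rfl⟩) <;> exact abs_nonneg _

variable {P μ γ}

theorem minGap_le_of_u {i j j'} (h : P.u i j j') : minGap P μ γ ≤ |μ i j - μ i j'| :=
  csInf_le (bddBelow_gapSet P μ γ) (Or.inl ⟨i, j, j', Or.inl h, rfl⟩)

theorem minGap_le_of_a {j i i'} (h : P.a j i i') : minGap P μ γ ≤ |γ j i - γ j i'| :=
  csInf_le (bddBelow_gapSet P μ γ) (Or.inr ⟨j, i, i', Or.inl h, rfl⟩)

theorem minGap_pos (hμ : ∀ i j j', j ≠ j' → μ i j ≠ μ i j')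
    (hγ : ∀ j i i', i ≠ i' → γ j i ≠ γ j i') (h : (gapSet P μ γ).Nonempty) :
    0 < minGap P μ γ := by
  change 0 < sInf (gapSet P μ γ)
  rcases h.csInf_mem (gapSet_finite P μ γ) with ⟨i, j, j', hP, he⟩ | ⟨j, i, i', hP, he⟩
  · have hne : j ≠ j' := by rintro rfl; exact hP.elim (P.u_irrefl i j) (P.u_irrefl i j)
    rw [he]
    exact abs_pos.2 (sub_ne_zero.2 (hμ i j j' hne))
  · have hne : i ≠ i' := by rintro rfl; exact hP.elim (P.a_irrefl j i) (P.a_irrefl j i)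
    rw [he]
    exact abs_pos.2 (sub_ne_zero.2 (hγ j i i' hne))

theorem minGap_le_admissibleGap (h : Admissible (inducedRank μ γ) P) :
    minGap P μ γ ≤ admissibleGap μ γ := by
  refine le_csSup ((Set.finite_range fun Q : PartialRank N K => minGap Q μ γ).subset ?_).bddAbove
    ⟨P, h, rfl⟩
  rintro _ ⟨Q, -, rfl⟩
  exact ⟨Q, rfl⟩

theorem exists_admissible_lt_minGap {x : ℝ} (hne : ∃ P, Admissible (inducedRank μ γ) P)
    (hx : x < admissibleGap μ γ) :
    ∃ P, Admissible (inducedRank μ γ) P ∧ x < minGap P μ γ := by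
  obtain ⟨P, hP⟩ := hne
  obtain ⟨_, ⟨Q, hQ, rfl⟩, hlt⟩ := exists_lt_of_lt_csSup (by exact ⟨_, P, hP, rfl⟩) hx
  exact ⟨Q, hQ, hlt⟩

end Gaps

section InducedRank

variable {N K : ℕ} {μ : Fin N → Fin K → ℝ} {γ : Fin K → Fin N → ℝ}

theorem isFull_inducedRank (hμ : ∀ i j j', j ≠ j' → μ i j ≠ μ i j')
    (hγ : ∀ j i i', i ≠ i' → γ j i ≠ γ j i') : (inducedRank μ γ).IsFull :=
  ⟨fun i j j' hne => (hμ i j j' hne).lt_or_gt.symm,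
    fun j i i' hne => (hγ j i i' hne).lt_or_gt.symm⟩

theorem admissible_inducedRank_self (hμ : ∀ i j j', j ≠ j' → μ i j ≠ μ i j')
    (hγ : ∀ j i i', i ≠ i' → γ j i ≠ γ j i') (hNK : N ≤ K) :
    Admissible (inducedRank μ γ) (inducedRank μ γ) :=
  ⟨⟨isFull_inducedRank hμ hγ, fun _ _ _ => lt_asymm, fun _ _ _ => lt_asymm⟩,
    exists_isSuperStable_inducedRank hμ hγ hNK⟩

theorem admissibleGap_pos (hN : 0 < N) (hK : 1 < K) (hNK : N ≤ K)
    (hμ : ∀ i j j', j ≠ j' → μ i j ≠ μ i j')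
    (hγ : ∀ j i i', i ≠ i' → γ j i ≠ γ j i') : 0 < admissibleGap μ γ := by
  have h01 : (⟨0, by omega⟩ : Fin K) ≠ ⟨1, hK⟩ := by simp [Fin.ext_iff]
  have hgap : (gapSet (inducedRank μ γ) μ γ).Nonempty :=
    ⟨_, Or.inl ⟨⟨0, hN⟩, _, _, (isFull_inducedRank hμ hγ).1 _ _ _ h01, rfl⟩⟩
  exact (minGap_pos hμ hγ hgap).trans_le
    (minGap_le_admissibleGap (admissible_inducedRank_self hμ hγ hNK))

end InducedRank

section UcbLcb

variable {N K : ℕ} (μ : Fin N → Fin K → ℝ) (γ : Fin K → Fin N → ℝ)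
  (hatμ : Fin N → Fin K → ℝ) (hatγ : Fin K → Fin N → ℝ) (n : Fin N → Fin K → ℕ)
  (t : ℕ)

/-- The good event `G_t` for estimates `hatμ, hatγ` from `n` samples. -/
def IsWithinConfidence : Prop :=
  ∀ i j, 0 < n i j → |μ i j - hatμ i j| ≤ √(6 * log t / n i j) ∧
    |γ j i - hatγ j i| ≤ √(6 * log t / n i j)

variable {μ γ hatμ hatγ n t}

theorem ucbLcbRank_le_inducedRank (hgood : IsWithinConfidence μ γ hatμ hatγ n t) :
    ucbLcbRank hatμ hatγ n t ≤ inducedRank μ γ := by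
  constructor
  · rintro i j j' ⟨hn, hn', hlt⟩
    have h := abs_le.1 (hgood i j hn).1
    have h' := abs_le.1 (hgood i j' hn').1
    show μ i j' < μ i j
    linarith
  · rintro j i i' ⟨hn, hn', hlt⟩
    have h := abs_le.1 (hgood i j hn).2
    have h' := abs_le.1 (hgood i' j hn').2
    show γ j i' < γ j i
    linarith

theorem le_ucbLcbRank {P : PartialRank N K} {w : ℝ}
    (hgood : IsWithinConfidence μ γ hatμ hatγ n t)
    (hn : ∀ i j, 0 < n i j) (hw : ∀ i j, √(6 * log t / n i j) ≤ w)
    (hP : P ≤ inducedRank μ γ) (hgap : 4 * w < minGap P μ γ) :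
    P ≤ ucbLcbRank hatμ hatγ n t := by
  constructor
  · intro i j j' h
    have hg := minGap_le_of_u (μ := μ) (γ := γ) h
    rw [abs_of_pos (sub_pos.2 (hP.1 i j j' h))] at hg
    have h₁ := abs_le.1 (hgood i j (hn i j)).1
    have h₂ := abs_le.1 (hgood i j' (hn i j')).1
    exact ⟨hn i j, hn i j', by linarith [hw i j, hw i j']⟩
  · intro j i i' h
    have hg := minGap_le_of_a (μ := μ) (γ := γ) h
    rw [abs_of_pos (sub_pos.2 (hP.2 j i i' h))] at hg
    have h₁ := abs_le.1 (hgood i j (hn i j)).2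
    have h₂ := abs_le.1 (hgood i' j (hn i' j)).2
    exact ⟨hn i j, hn i' j, by linarith [hw i j, hw i' j]⟩

theorem nonempty_superStableSet_ucbLcbRank {w : ℝ}
    (hμ : ∀ i j j', j ≠ j' → μ i j ≠ μ i j')
    (hγ : ∀ j i i', i ≠ i' → γ j i ≠ γ j i') (hNK : N ≤ K)
    (hgood : IsWithinConfidence μ γ hatμ hatγ n t)
    (hn : ∀ i j, 0 < n i j) (hw : ∀ i j, √(6 * log t / n i j) ≤ w)
    (hgap : 4 * w < admissibleGap μ γ) :
    (superStableSet (ucbLcbRank hatμ hatγ n t)).Nonempty := by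
  obtain ⟨P, ⟨⟨hF, hFP⟩, M, hM⟩, hPgap⟩ :=
    exists_admissible_lt_minGap ⟨_, admissible_inducedRank_self hμ hγ hNK⟩ hgap
  exact ⟨M, IsSuperStable.mono (le_ucbLcbRank hgood hn hw (le_of_compatible hF hFP) hPgap) hM⟩

end UcbLcb

theorem div_le_count_add_mod_eq {K r : ℕ} (hr : r < K) (a b : ℕ) :
    b / K ≤ Nat.count (fun τ => (a + τ) % K = r) b := by
  set v := r + (K - 1) * a
  have hv : a + v ≡ r [MOD K] := by
    have : a + v = r + K * a := by
      obtain ⟨k, rfl⟩ := Nat.exists_eq_add_of_lt hr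
      simp only [v, show r + k + 1 - 1 = r + k by omega]
      ring
    rw [this]
    exact Nat.add_mul_mod_self_left r K a
  calc b / K ≤ Nat.count (· ≡ v [MOD K]) b := by
        rw [Nat.count_modEq_card _ (by omega)]
        exact Nat.le_add_right _ _
    _ ≤ _ := Nat.count_mono_left fun τ _ h =>
        Eq.trans ((h.add_left a).trans hv) (Nat.mod_eq_of_lt hr)

section RoundRobin

variable {N K : ℕ} {hNK : N ≤ K} {hK : 0 < K} {matchAt : ℕ → Matching N K}
  {e : ℕ → Prop}

theorem count_le_card_filter_roundRobin
    (hRR : ∀ s, 1 ≤ s → e s → matchAt s = roundRobin hNK hK #{s' ∈ Icc 1 (s - 1) | e s'})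
    (i : Fin N) (j : Fin K) (n : ℕ) :
    Nat.count (fun τ => ((i : ℕ) + τ) % K = j) #{s ∈ Icc 1 n | e s} ≤
      #{s ∈ Icc 1 n | (matchAt s).1 i = j} := by
  -- the exploration rounds carry the consecutive indices `0, 1, 2, …`
  induction n with
  | zero => simp
  | succ n ih =>
    rw [← insert_Icc_right_eq_Icc_add_one (by omega), filter_insert, filter_insert]
    have hnot : n + 1 ∉ Icc 1 n := by simp
    by_cases he : e (n + 1)
    · have hm := hRR (n + 1) (by omega) he
      simp only [he, if_true, add_tsub_cancel_right] at hm ⊢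
      rw [card_insert_of_notMem (fun h => hnot (mem_filter.1 h).1), Nat.count_succ, hm]
      split_ifs with hij <;> simp_all [roundRobin, Fin.ext_iff]
    · simp only [he, if_false]
      split_ifs
      · exact ih.trans (card_le_card (subset_insert _ _))
      · exact ih

theorem card_filter_lt_mul_cnt_add_one
    (hRR : ∀ s, 1 ≤ s → e s → matchAt s = roundRobin hNK hK #{s' ∈ Icc 1 (s - 1) | e s'})
    (i : Fin N) (j : Fin K) (t : ℕ) :
    #{s ∈ Icc 1 (t - 1) | e s} < K * (cnt matchAt i j t + 1) :=
  calc _ < K * (#{s ∈ Icc 1 (t - 1) | e s} / K + 1) := Nat.lt_mul_div_succ _ hK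
    _ ≤ K * (cnt matchAt i j t + 1) := by
      gcongr
      exact (div_le_count_add_mod_eq j.2 i _).trans (count_le_card_filter_roundRobin hRR i j _)

end RoundRobin

theorem sqrt_six_log_div_le {t T m : ℕ} {k x : ℝ} (h1t : 1 ≤ t) (htT : t ≤ T) (hx : 0 < x)
    (hm : x ≤ k * m) : √(6 * log t / m) ≤ √(6 * k * log T / x) := by
  have hm₀ : (0 : ℝ) < m :=
    Nat.cast_pos.2 (Nat.pos_of_ne_zero fun h => by simp [h] at hm; linarith)
  have hlog₀ : 0 ≤ log t := Real.log_nonneg (by exact_mod_cast h1t)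
  have hlog : log t ≤ log T := Real.log_le_log (by exact_mod_cast h1t) (by exact_mod_cast htT)
  apply Real.sqrt_le_sqrt
  rw [div_le_div_iff₀ hm₀ hx]
  calc 6 * log t * x ≤ 6 * log t * (k * m) := by gcongr
    _ ≤ 6 * k * log T * m := by nlinarith

theorem four_mul_sqrt_div_lt {c x Δ : ℝ} (hc : 0 ≤ c) (hΔ : 0 < Δ)
    (h : 16 * c / Δ ^ 2 < x) : 4 * √(c / x) < Δ := by
  have hx : 0 < x := lt_of_le_of_lt (by positivity) h
  have : c / x < (Δ / 4) ^ 2 := by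
    rw [div_lt_iff₀ (by positivity)] at h
    rw [div_lt_iff₀ hx]
    nlinarith
  linarith [(Real.sqrt_lt' (by positivity)).2 this]

/-- Lemma 4, convergence to the admissible set: on the good
event, if Algorithm 1 (which plays the round-robin matching exactly in the
rounds whose partial rank has no super-stable matching) has performed more than
`K + 96 K log T / Δ_A(μ,γ)²` exploration rounds by time `t ≤ T`, then the
UCB-LCB partial rank at time `t` is admissible for the true full rank. -/
theorem trajRank_admissible_of_explored
    (N K : ℕ) (hN : 0 < N) (hNK : N ≤ K) (hK : 0 < K)
    (μ : Fin N → Fin K → ℝ) (γ : Fin K → Fin N → ℝ)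
    (hμ : ∀ i j j', j ≠ j' → μ i j ≠ μ i j')
    (hγ : ∀ j i i', i ≠ i' → γ j i ≠ γ j i')
    (η η' : Fin N → Fin K → ℕ → ℝ)
    (matchAt : ℕ → Matching N K)
    -- Algorithm 1: a round is a round-robin exploration round exactly when the
    -- Extended Gale–Shapley algorithm finds no super-stable matching
    (halgRR : ∀ t, 1 ≤ t →
      superStableSet (trajRank μ γ η η' matchAt t) = ∅ →
      matchAt t = roundRobin hNK hK (nExplore μ γ η η' matchAt t))
    (hgood : GoodTraj μ γ η η' matchAt)
    (T t : ℕ) (h1t : 1 ≤ t) (htT : t ≤ T)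
    (hexp : (K : ℝ) + 96 * K * Real.log T / (admissibleGap μ γ) ^ 2 <
      (nExplore μ γ η η' matchAt t : ℝ)) :
    Admissible (inducedRank μ γ) (trajRank μ γ η η' matchAt t) := by
  have hcompat := compatible_of_le (ucbLcbRank_le_inducedRank (hgood t h1t))
  refine ⟨⟨isFull_inducedRank hμ hγ, hcompat⟩, ?_⟩
  rcases le_or_gt K 1 with hK1 | hK1
  · exact ⟨roundRobin hNK hK 0, isSuperStable_of_le_one hK1 _ _⟩
  have hΔ := admissibleGap_pos hN hK1 hNK hμ hγ
  have hlogT : 0 ≤ log T := Real.log_nonneg (by exact_mod_cast h1t.trans htT)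
  set E := nExplore μ γ η η' matchAt t
  have hEK : (K : ℝ) < E := lt_of_le_of_lt (le_add_of_nonneg_right (by positivity)) hexp
  have hsampled : ∀ i j, (E : ℝ) - K ≤ K * cnt matchAt i j t := fun i j => by
    have : (E : ℝ) < K * (cnt matchAt i j t + 1) := by
      exact_mod_cast card_filter_lt_mul_cnt_add_one halgRR i j t
    linarith
  have hpos : ∀ i j, 0 < cnt matchAt i j t := fun i j =>
    Nat.cast_pos.1 (pos_of_mul_pos_right ((sub_pos.2 hEK).trans_le (hsampled i j)) K.cast_nonneg)
  refine nonempty_superStableSet_ucbLcbRank hμ hγ hNK (hgood t h1t) hpos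
    (fun i j => sqrt_six_log_div_le h1t htT (sub_pos.2 hEK) (hsampled i j))
    (four_mul_sqrt_div_lt (by positivity) hΔ ?_)
  linarith [show 16 * (6 * K * log T) / admissibleGap μ γ ^ 2 =
    96 * K * log T / admissibleGap μ γ ^ 2 by ring]
end
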